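/- Let q ≥ 3 be an integer. There exists a constant C > 0 (depending only on q) such that for all real H ≥ 1, all integers r, d, m ≥ 1 with rd ≤ H, and every real Y with m ≤ Y: |𝔞*_H(r²m, rd)| ≤ C·( Y^{1/2} / (r^{1/2}·m^{3/4}·H) )·#{(a,b) ∈ ℤ² : a²+b² = m, a ≠ 0, d∣b}·𝟙_{r²m ≤ 2H²}, and the same bound holds for |𝔡*_H(r²m, rd)|. -/

import Mathlib

open Real MeasureTheory Finset ArithmeticFunction

noncomputable section

namespace Gath

/-- Number of lattice points in the Heisenberg dilate `δ_x B` of the unit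
Cygan–Korányi ball: `#{(z,z') ∈ ℤ^{2q} × ℤ : |z|₂⁴ + z'² ≤ x⁴}`. -/
def latticeCount (q : ℕ) (x : ℝ) : ℝ :=
  Set.ncard {p : (Fin (2*q) → ℤ) × ℤ |
    (((∑ i, (p.1 i)^2)^2 + p.2^2 : ℤ) : ℝ) ≤ x^4}

/-- Volume of the unit Cygan–Korányi ball `B ⊆ ℝ^{2q} × ℝ`. -/
def ballVol (q : ℕ) : ℝ :=
  (volume {p : (Fin (2*q) → ℝ) × ℝ | (∑ i, (p.1 i)^2)^2 + p.2^2 ≤ 1}).toReal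

/-- The error term `𝓔_q(x)`. -/
def errE (q : ℕ) (x : ℝ) : ℝ := latticeCount q x - ballVol q * x^(2*q+2)

/-- `r_{2q}(m)`: number of representations of `m` as a sum of `2q` squares. -/
def r2q (q m : ℕ) : ℝ :=
  Set.ncard {a : Fin (2*q) → ℤ | ∑ i, (a i)^2 = (m:ℤ)}

/-- The nontrivial Dirichlet character mod 4 (real-valued). -/
def chi4 (n : ℤ) : ℝ := ((ZMod.χ₄ (n : ZMod 4) : ℤ) : ℝ)

/-- Pairs `(a,b) ∈ ℤ²` with `a² + b² = m` and `d ∣ b`. -/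
def repPairs (m d : ℕ) : Finset (ℤ × ℤ) :=
  ((Finset.Icc (-(m:ℤ)) (m:ℤ)) ×ˢ (Finset.Icc (-(m:ℤ)) (m:ℤ))).filter
    (fun p => p.1^2 + p.2^2 = (m:ℤ) ∧ (d:ℤ) ∣ p.2)

/-- `r₂(m,d;q) = Σ_{a²+b²=m, d∣b} (|a|/√m)^{q-1}`. -/
def r2w (q m d : ℕ) : ℝ :=
  ∑ p ∈ repPairs m d, (|(p.1 : ℝ)| / Real.sqrt m)^(q-1)

/-- `r_{2,χ}(m,d;q) = Σ_{a²+b²=m, d∣b} χ(|a|)·(|a|/√m)^{q-1}`. -/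
def r2wchi (q m d : ℕ) : ℝ :=
  ∑ p ∈ repPairs m d, chi4 |p.1| * (|(p.1 : ℝ)| / Real.sqrt m)^(q-1)

/-- `c_q = (2^{4q-1} - 1)/(4q - 1)`. -/
def cQ (q : ℕ) : ℝ := ((2:ℝ)^(4*q-1) - 1) / (4*q-1)

/-- `γ_q = (c_q/2)·(π^{q-1}/(2Γ(q)))²`. -/
def gammaQ (q : ℕ) : ℝ := cQ q / 2 * (π^(q-1) / (2*Real.Gamma q))^2

/-- `ζ(q) = Σ_{n≥1} 1/n^q`. -/
def zetaR (q : ℕ) : ℝ := ∑' n : ℕ, 1/((n:ℝ)+1)^q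

/-- `L(q,χ) = Σ_{n≥1} χ(n)/n^q`. -/
def LchiR (q : ℕ) : ℝ := ∑' n : ℕ, chi4 ((n:ℤ)+1)/((n:ℝ)+1)^q

/-- `ϱ_q = π^q/((1-2^{-q})Γ(q)ζ(q))`. -/
def rhoQ (q : ℕ) : ℝ := π^q / ((1 - ((2:ℝ)⁻¹)^q) * Real.Gamma q * zetaR q)

/-- `ϱ_{χ,q} = π^q/(2^{q-1}Γ(q)L(q,χ))`. -/
def rhoChiQ (q : ℕ) : ℝ := π^q / ((2:ℝ)^(q-1) * Real.Gamma q * LchiR q)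

/-- `ξ(d) = 𝟙_{d odd} + (-1)^{q/2+1}𝟙_{d even} + (-1)^{q/2}·2^q·𝟙_{4∣d}`. -/
def xiQ (q d : ℕ) : ℝ :=
  (if d % 2 = 1 then (1:ℝ) else 0) + (-1:ℝ)^(q/2+1) * (if d % 2 = 0 then 1 else 0)
    + (-1:ℝ)^(q/2) * 2^q * (if d % 4 = 0 then 1 else 0)

/-- The sawtooth function `ψ(t) = t - ⌊t⌋ - 1/2`. -/
def sawtooth (t : ℝ) : ℝ := Int.fract t - 1/2

/-- `𝔣(t) = √(1-t²)`. -/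
def ff (t : ℝ) : ℝ := Real.sqrt (1 - t^2)

/-- `𝔤(t) = (1-t²)^{(q-1)/2}`. -/
def gg (q : ℕ) (t : ℝ) : ℝ := (1 - t^2)^(((q:ℝ)-1)/2)

/-- `𝔤̂(t) = t^{q-1}`. -/
def ggHat (q : ℕ) (t : ℝ) : ℝ := t^(q-1)

/-- `τ(t) = t(1-t)cot(πt) + t/π`. -/
def tau (t : ℝ) : ℝ := t*(1-t)*(Real.cos (π*t)/Real.sin (π*t)) + t/π

/-- `τ*(t) = t(1-t)`. -/
def tauStar (t : ℝ) : ℝ := t*(1-t)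

/-- `e(t) = e^{2πit}`. -/
def eF (t : ℝ) : ℂ := Complex.exp (2*π*Complex.I*t)

/-- Weight for the `Σ''` summation convention: terms with `n = 0` or `n = h`
carry weight `1/2`. -/
def wD (n h : ℕ) : ℝ := if n = 0 ∨ n = h then 1/2 else 1

/-- `λ(h) = 𝟙_{h ≡ 0 (4)} - 𝟙_{h ≡ 2 (4)}`. -/
def lamD (h : ℕ) : ℝ := (if h % 4 = 0 then (1:ℝ) else 0) - (if h % 4 = 2 then 1 else 0)

/-- `S^𝔤_ψ(x²; (1/d)𝔣) = Σ_{0<n≤x²/√2} 𝔤(n/x²)·ψ((x²/d)·𝔣(n/x²))`. -/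
def SgPsi (q d : ℕ) (x : ℝ) : ℝ :=
  ∑ n ∈ Finset.Icc 1 (Nat.floor (x^2/Real.sqrt 2)),
    gg q ((n:ℝ)/x^2) * sawtooth ((x^2/d) * ff ((n:ℝ)/x^2))

/-- `S^𝔤_{ψ,χ}(x²; (1/(4d))𝔣)`. -/
def SgPsiChi (q d : ℕ) (x : ℝ) : ℝ :=
  ∑ n ∈ Finset.Icc 1 (Nat.floor (x^2/Real.sqrt 2)),
    gg q ((n:ℝ)/x^2) * ∑ a ∈ Finset.range 4,
      chi4 (a:ℤ) * sawtooth ((x^2/(4*d)) * ff ((n:ℝ)/x^2) + (a:ℝ)/4)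

/-- `S^𝔤̂_ψ(x²/d; d𝔣) = Σ_{0<n≤x²/(√2·d)} 𝔤̂(dn/x²)·ψ(x²·𝔣(dn/x²))`. -/
def SghatPsi (q d : ℕ) (x : ℝ) : ℝ :=
  ∑ n ∈ Finset.Icc 1 (Nat.floor (x^2/(Real.sqrt 2 * d))),
    ggHat q (((d*n : ℕ):ℝ)/x^2) * sawtooth (x^2 * ff (((d*n : ℕ):ℝ)/x^2))

/-- `S^{𝔤̂,χ}_ψ(x²/d; d𝔣)`. -/
def SghatPsiChi (q d : ℕ) (x : ℝ) : ℝ :=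
  ∑ n ∈ Finset.Icc 1 (Nat.floor (x^2/(Real.sqrt 2 * d))),
    chi4 (n:ℤ) * ggHat q (((d*n : ℕ):ℝ)/x^2) * sawtooth (x^2 * ff (((d*n : ℕ):ℝ)/x^2))

/-- Pairs `(n,h)` with `n² + h² = m`, `1 ≤ h ≤ H`, `0 ≤ n ≤ h`, `d ∣ n`. -/
def pairsA (H : ℝ) (m d : ℕ) : Finset (ℕ × ℕ) :=
  (Finset.range (m+1) ×ˢ Finset.range (m+1)).filter
    (fun p => p.1^2 + p.2^2 = m ∧ 1 ≤ p.2 ∧ (p.2:ℝ) ≤ H ∧ p.1 ≤ p.2 ∧ d ∣ p.1)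

/-- Pairs `(n,h)` with `n² + h² = m`, `1 ≤ h ≤ H`, `0 ≤ n ≤ h`, `d ∣ h`. -/
def pairsB (H : ℝ) (m d : ℕ) : Finset (ℕ × ℕ) :=
  (Finset.range (m+1) ×ˢ Finset.range (m+1)).filter
    (fun p => p.1^2 + p.2^2 = m ∧ 1 ≤ p.2 ∧ (p.2:ℝ) ≤ H ∧ p.1 ≤ p.2 ∧ d ∣ p.2)

/-- The coefficient `𝔞_H(m,d)`. -/
def aH (q : ℕ) (H : ℝ) (m d : ℕ) : ℝ :=
  (m:ℝ)^(-(3/4:ℝ)) *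
    ((∑ p ∈ pairsA H m d,
        wD p.1 p.2 * tau ((p.2:ℝ)/((⌊H⌋:ℝ)+1)) * gg q ((p.1:ℝ)/Real.sqrt m))
     + ∑ p ∈ pairsB H m d,
        wD p.1 p.2 * tau ((p.2:ℝ)/((d:ℝ)*(⌊H/(d:ℝ)⌋:ℝ)+d)) * ggHat q ((p.1:ℝ)/Real.sqrt m))

/-- The coefficient `𝔞*_H(m,d)`. -/
def aHstar (q : ℕ) (H : ℝ) (m d : ℕ) : ℝ :=
  (m:ℝ)^(-(3/4:ℝ)) *
    ((∑ p ∈ pairsA H m d,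
        wD p.1 p.2 * tauStar ((p.2:ℝ)/((⌊H⌋:ℝ)+1)) * gg q ((p.1:ℝ)/Real.sqrt m))
     + ∑ p ∈ pairsB H m d,
        wD p.1 p.2 * tauStar ((p.2:ℝ)/((d:ℝ)*(⌊H/(d:ℝ)⌋:ℝ)+d)) * ggHat q ((p.1:ℝ)/Real.sqrt m))

/-- The coefficient `𝔞_{H,χ}(m,d)`. -/
def aHchi (q : ℕ) (H : ℝ) (m d : ℕ) : ℝ :=
  2 * (m:ℝ)^(-(3/4:ℝ)) *
    ((∑ p ∈ pairsA H m d,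
        wD p.1 p.2 * chi4 (-(p.2:ℤ)) * tau ((p.2:ℝ)/((⌊H⌋:ℝ)+1)) * gg q ((p.1:ℝ)/Real.sqrt m))
     + ∑ p ∈ pairsB H m d,
        wD p.1 p.2 * chi4 (-(p.1:ℤ)) * tau ((p.2:ℝ)/((d:ℝ)*(⌊H/(d:ℝ)⌋:ℝ)+d)) *
          ggHat q ((p.1:ℝ)/Real.sqrt m))

/-- The coefficient `𝔟*_H(m,d)`. -/
def bHstar (q : ℕ) (H : ℝ) (m d : ℕ) : ℝ :=
  2 * (m:ℝ)^(-(3/4:ℝ)) *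
    ((∑ p ∈ pairsA H m d,
        wD p.1 p.2 * lamD p.2 * tauStar ((p.2:ℝ)/((⌊H⌋:ℝ)+1)) * gg q ((p.1:ℝ)/Real.sqrt m))
     + 2 * ∑ p ∈ (pairsB H m d).filter (fun p => 4 ∣ p.1),
        wD p.1 p.2 * tauStar ((p.2:ℝ)/((d:ℝ)*(⌊H/(d:ℝ)⌋:ℝ)+d)) * ggHat q ((p.1:ℝ)/Real.sqrt m))

/-- The coefficient `𝔡*_H(m,d) = 2^{q-1}𝔞*_H(m,d) + 𝟙_{4∣d}·4^{q-1}·𝔟*_H(m,d)`. -/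
def dHstar (q : ℕ) (H : ℝ) (m d : ℕ) : ℝ :=
  2^(q-1) * aHstar q H m d + (if d % 4 = 0 then (1:ℝ) else 0) * 4^(q-1) * bHstar q H m d

/-- `#{(a,b) ∈ ℤ² : a² + b² = m, a ≠ 0, d ∣ b}`. -/
def countRep (m d : ℕ) : ℝ :=
  Set.ncard {p : ℤ × ℤ | p.1^2 + p.2^2 = (m:ℤ) ∧ p.1 ≠ 0 ∧ (d:ℤ) ∣ p.2}

/-- `ϖ(d)`: the number of positive divisors of `d`. -/
def divCount (d : ℕ) : ℝ := d.divisors.card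

/-- The diagonal sum `Ξ(ν,α)`. -/
def XiD (ν : ℕ → ℝ) (α : ℕ → ℕ → ℝ) : ℝ :=
  ∑' t : ℕ × ℕ × ℕ,
    if 1 ≤ t.1 ∧ 1 ≤ t.2.1 ∧ 1 ≤ t.2.2 ∧ Nat.gcd t.2.1 t.2.2 = 1 then
      |((moebius t.1 : ℤ) : ℝ)| *
        (∑' r : ℕ, if 1 ≤ r then ν (r*t.2.1) * α ((r*t.2.2)^2*t.1) (r*t.2.1) else 0)^2
    else 0

/-- `φ(y) = 1 - y` on `[0,1]`, `0` for `y > 1`. -/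
def phiF (y : ℝ) : ℝ := if y ≤ 1 then 1 - y else 0

end Gath
namespace Gath

/-! Every summand of `𝔞*_H(M, D)` and `𝔟*_H(M, D)` is at most `√M / H` in absolute value: the
weights, `λ`, `𝔤` and `𝔤̂` are bounded by `1`, and `0 ≤ τ*(t) ≤ t` with `t = h / N`, `h ≤ √M`,
`N > H`. For `M = r²m` and `D = rd`, a pair `(n, h)` in either sum is divisible by `r`, and
`(h/r, n/r)` (or `(n/r, h/r)`, or `(h/r, 0)`) is a representation of `m` counted by
`countRep m d`, so there are at most `countRep m d` summands; as `n ≤ h ≤ H` there are none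
unless `r²m ≤ 2H²`. Finally `M^{-3/4} √M / H = √m / (r^{1/2} m^{3/4} H)`. -/

lemma abs_wD_le_one (n h : ℕ) : |wD n h| ≤ 1 := by
  unfold wD; split <;> norm_num

lemma abs_lamD_le_one (h : ℕ) : |lamD h| ≤ 1 := by
  unfold lamD; split <;> split <;> norm_num

lemma abs_gg_le_one {q : ℕ} (hq : 1 ≤ q) {u : ℝ} (hu₀ : 0 ≤ u) (hu₁ : u ≤ 1) :
    |gg q u| ≤ 1 := by
  have hbase : 0 ≤ 1 - u ^ 2 := by nlinarith
  have hexp : (0 : ℝ) ≤ ((q : ℝ) - 1) / 2 := by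
    have : (1 : ℝ) ≤ q := by exact_mod_cast hq
    linarith
  rw [gg, abs_of_nonneg (Real.rpow_nonneg hbase _)]
  exact Real.rpow_le_one hbase (by nlinarith) hexp

lemma abs_ggHat_le_one (q : ℕ) {u : ℝ} (hu₀ : 0 ≤ u) (hu₁ : u ≤ 1) : |ggHat q u| ≤ 1 := by
  rw [ggHat, abs_of_nonneg (pow_nonneg hu₀ _)]
  exact pow_le_one₀ hu₀ hu₁

lemma abs_tauStar_le {t : ℝ} (ht₀ : 0 ≤ t) (ht₁ : t ≤ 1) : |tauStar t| ≤ t := by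
  rw [tauStar, abs_of_nonneg (by nlinarith)]
  nlinarith

lemma abs_tauStar_div_le {h H N : ℝ} (hh : 0 < h) (hhH : h ≤ H) (hHN : H < N) :
    |tauStar (h / N)| ≤ h / H := by
  have hH : 0 < H := hh.trans_le hhH
  calc |tauStar (h / N)| ≤ h / N :=
        abs_tauStar_le (div_nonneg hh.le (by linarith))
          ((div_le_one (by linarith)).mpr (by linarith))
    _ ≤ h / H := div_le_div_of_nonneg_left hh.le hH hHN.le

lemma lt_mul_floor_div_add_self (H : ℝ) {D : ℝ} (hD : 0 < D) : H < D * ⌊H / D⌋ + D := by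
  have := (div_lt_iff₀ hD).mp (Int.lt_floor_add_one (H / D))
  linarith

lemma abs_sum_le_card_mul {ι : Type*} {s : Finset ι} {f : ι → ℝ} {B : ℝ}
    (h : ∀ i ∈ s, |f i| ≤ B) : |∑ i ∈ s, f i| ≤ #s * B := by
  calc |∑ i ∈ s, f i| ≤ ∑ i ∈ s, |f i| := abs_sum_le_sum_abs _ _
    _ ≤ #s • B := sum_le_card_nsmul s _ B h
    _ = #s * B := nsmul_eq_mul _ _

section Pairs

lemma mem_pairsA {H : ℝ} {M D : ℕ} {p : ℕ × ℕ} :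
    p ∈ pairsA H M D ↔
      p.1 ^ 2 + p.2 ^ 2 = M ∧ 1 ≤ p.2 ∧ (p.2 : ℝ) ≤ H ∧ p.1 ≤ p.2 ∧ D ∣ p.1 := by
  simp only [pairsA, mem_filter, mem_product, mem_range, and_iff_right_iff_imp]
  rintro ⟨hsum, -⟩
  have := Nat.le_self_pow two_ne_zero p.1
  have := Nat.le_self_pow two_ne_zero p.2
  omega

lemma mem_pairsB {H : ℝ} {M D : ℕ} {p : ℕ × ℕ} :
    p ∈ pairsB H M D ↔
      p.1 ^ 2 + p.2 ^ 2 = M ∧ 1 ≤ p.2 ∧ (p.2 : ℝ) ≤ H ∧ p.1 ≤ p.2 ∧ D ∣ p.2 := by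
  simp only [pairsB, mem_filter, mem_product, mem_range, and_iff_right_iff_imp]
  rintro ⟨hsum, -⟩
  have := Nat.le_self_pow two_ne_zero p.1
  have := Nat.le_self_pow two_ne_zero p.2
  omega

lemma cast_le_two_mul_sq {n h M : ℕ} {H : ℝ} (hsum : n ^ 2 + h ^ 2 = M) (hnh : n ≤ h)
    (hhH : (h : ℝ) ≤ H) : (M : ℝ) ≤ 2 * H ^ 2 := by
  have hM : (M : ℝ) ≤ 2 * (h : ℝ) ^ 2 := by
    have : M ≤ 2 * h ^ 2 := by nlinarith
    exact_mod_cast this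
  nlinarith [(Nat.cast_nonneg h : (0 : ℝ) ≤ h)]

lemma cast_le_sqrt_of_sq_le {n M : ℕ} (h : n ^ 2 ≤ M) : (n : ℝ) ≤ √M := by
  simpa using Real.abs_le_sqrt (x := (n : ℝ)) (by exact_mod_cast h)

lemma abs_term_le {w g H N : ℝ} {n h M : ℕ} (hw : |w| ≤ 1) (hg : |g| ≤ 1)
    (hsum : n ^ 2 + h ^ 2 = M) (hh : 1 ≤ h) (hhH : (h : ℝ) ≤ H) (hHN : H < N) :
    |w * tauStar (h / N) * g| ≤ √M / H := by
  have hH : 0 < H := by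
    have : (1 : ℝ) ≤ h := by exact_mod_cast hh
    linarith
  have hτ : |tauStar (h / N)| ≤ √M / H :=
    (abs_tauStar_div_le (by positivity) hhH hHN).trans
      (div_le_div_of_nonneg_right (cast_le_sqrt_of_sq_le (by omega)) hH.le)
  rw [abs_mul, abs_mul]
  calc |w| * |tauStar (h / N)| * |g| ≤ 1 * (√M / H) * 1 := by gcongr
    _ = √M / H := by ring

lemma div_sqrt_mem_Icc {n h M : ℕ} (hsum : n ^ 2 + h ^ 2 = M) :
    (n : ℝ) / √M ∈ Set.Icc 0 1 :=
  ⟨by positivity, div_le_one_of_le₀ (cast_le_sqrt_of_sq_le (by omega)) (Real.sqrt_nonneg _)⟩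

variable {q : ℕ} {H : ℝ} {M D : ℕ}

lemma abs_termA_le (hq : 1 ≤ q) {p : ℕ × ℕ} (hp : p ∈ pairsA H M D) :
    |wD p.1 p.2 * tauStar (p.2 / ((⌊H⌋ : ℝ) + 1)) * gg q (p.1 / √M)| ≤ √M / H := by
  obtain ⟨hsum, hh, hhH, -, -⟩ := mem_pairsA.mp hp
  obtain ⟨hu₀, hu₁⟩ := div_sqrt_mem_Icc hsum
  exact abs_term_le (abs_wD_le_one _ _) (abs_gg_le_one hq hu₀ hu₁) hsum hh hhH
    (Int.lt_floor_add_one H)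

lemma abs_termB_le (hD : 0 < D) {p : ℕ × ℕ} (hp : p ∈ pairsB H M D) :
    |wD p.1 p.2 * tauStar (p.2 / ((D : ℝ) * ⌊H / D⌋ + D)) * ggHat q (p.1 / √M)| ≤
      √M / H := by
  obtain ⟨hsum, hh, hhH, -, -⟩ := mem_pairsB.mp hp
  obtain ⟨hu₀, hu₁⟩ := div_sqrt_mem_Icc hsum
  exact abs_term_le (abs_wD_le_one _ _) (abs_ggHat_le_one q hu₀ hu₁) hsum hh hhH
    (lt_mul_floor_div_add_self H (by exact_mod_cast hD))

end Pairs

section Counting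

lemma mem_repPairs {m d : ℕ} {z : ℤ × ℤ} :
    z ∈ repPairs m d ↔ z.1 ^ 2 + z.2 ^ 2 = m ∧ (d : ℤ) ∣ z.2 := by
  simp only [repPairs, mem_filter, mem_product, mem_Icc, and_iff_right_iff_imp]
  rintro ⟨hsum, -⟩
  have := Int.le_self_sq z.1
  have := Int.le_self_sq (-z.1)
  have := Int.le_self_sq z.2
  have := Int.le_self_sq (-z.2)
  refine ⟨⟨?_, ?_⟩, ?_, ?_⟩ <;> nlinarith [sq_nonneg z.1, sq_nonneg z.2]

lemma countRep_eq_card (m d : ℕ) :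
    countRep m d = #((repPairs m d).filter (fun z => z.1 ≠ 0)) := by
  rw [countRep, ← Set.ncard_coe_finset]
  congr 2
  ext z
  simp only [Set.mem_ofPred_eq, coe_filter, mem_repPairs]
  tauto

def sortedScale (r : ℕ) (z : ℤ × ℤ) : ℕ × ℕ :=
  (r * min z.1.natAbs z.2.natAbs, r * max z.1.natAbs z.2.natAbs)

lemma exists_eq_mul_of_sq_add_sq {r m n h : ℕ} (hr : 0 < r) (hsum : n ^ 2 + h ^ 2 = r ^ 2 * m)
    (hn : r ∣ n) : ∃ a b, n = r * b ∧ h = r * a ∧ b ^ 2 + a ^ 2 = m := by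
  obtain ⟨b, rfl⟩ := hn
  have hh : r ^ 2 ∣ h ^ 2 := by
    rw [show h ^ 2 = r ^ 2 * m - r ^ 2 * b ^ 2 by rw [← hsum]; ring_nf; omega]
    exact Nat.dvd_sub (dvd_mul_right _ _) (dvd_mul_right _ _)
  obtain ⟨a, rfl⟩ := (Nat.pow_dvd_pow_iff two_ne_zero).mp hh
  refine ⟨a, b, rfl, rfl, Nat.eq_of_mul_eq_mul_left (pow_pos hr 2) ?_⟩
  rw [← hsum]; ring

variable {H : ℝ} {r m d : ℕ}

lemma pairsA_subset_image (hr : 0 < r) :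
    pairsA H (r ^ 2 * m) (r * d) ⊆
      ((repPairs m d).filter (fun z => z.1 ≠ 0)).image (sortedScale r) := by
  rintro ⟨n, h⟩ hp
  obtain ⟨hsum, hh, -, hnh, hdn⟩ := mem_pairsA.mp hp
  obtain ⟨a, b, rfl, rfl, hab⟩ :=
    exists_eq_mul_of_sq_add_sq hr hsum (dvd_trans (dvd_mul_right r d) hdn)
  have hba : b ≤ a := Nat.le_of_mul_le_mul_left hnh hr
  refine mem_image.mpr ⟨((a : ℤ), (b : ℤ)), ?_, ?_⟩
  · simp only [mem_filter, mem_repPairs]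
    refine ⟨⟨by rw [← hab]; push_cast; ring, ?_⟩, ?_⟩
    · exact_mod_cast Nat.dvd_of_mul_dvd_mul_left hr hdn
    · exact_mod_cast (show a ≠ 0 by rintro rfl; simp at hh)
  · simp [sortedScale, hba]

lemma pairsB_subset_image (hr : 0 < r) :
    pairsB H (r ^ 2 * m) (r * d) ⊆
      ((repPairs m d).filter (fun z => z.1 ≠ 0)).image (sortedScale r) := by
  rintro ⟨n, h⟩ hp
  obtain ⟨hsum, hh, -, hnh, hdh⟩ := mem_pairsB.mp hp
  rw [add_comm] at hsum
  obtain ⟨b, a, rfl, rfl, hab⟩ :=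
    exists_eq_mul_of_sq_add_sq hr hsum (dvd_trans (dvd_mul_right r d) hdh)
  have hba : b ≤ a := Nat.le_of_mul_le_mul_left hnh hr
  have hda : (d : ℤ) ∣ a := by exact_mod_cast Nat.dvd_of_mul_dvd_mul_left hr hdh
  have ha : (a : ℤ) ≠ 0 := by exact_mod_cast (show a ≠ 0 by rintro rfl; simp at hh)
  simp only [mem_image, mem_filter, mem_repPairs]
  -- `(0, h)` comes from the representation `(h / r, 0)`, whose first coordinate is nonzero
  rcases Nat.eq_zero_or_pos b with rfl | hb
  · exact ⟨((a : ℤ), 0), ⟨⟨by rw [← hab]; push_cast; ring, dvd_zero _⟩, ha⟩,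
      by simp [sortedScale]⟩
  · exact ⟨((b : ℤ), (a : ℤ)), ⟨⟨by rw [← hab]; push_cast; ring, hda⟩, by positivity⟩,
      by simp [sortedScale, hba]⟩

lemma card_le_countRep_mul_indicator {s : Finset (ℕ × ℕ)}
    (hs : s ⊆ ((repPairs m d).filter (fun z => z.1 ≠ 0)).image (sortedScale r))
    (hM : ∀ p ∈ s, ((r ^ 2 * m : ℕ) : ℝ) ≤ 2 * H ^ 2) :
    (#s : ℝ) ≤ countRep m d * (if ((r ^ 2 * m : ℕ) : ℝ) ≤ 2 * H ^ 2 then 1 else 0) := by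
  split_ifs with hind
  · rw [mul_one, countRep_eq_card]
    exact_mod_cast (card_le_card hs).trans card_image_le
  · rw [mul_zero, Nat.cast_nonpos, card_eq_zero, eq_empty_iff_forall_notMem]
    exact fun p hp => hind (hM p hp)

lemma card_pairsA_le (hr : 0 < r) :
    (#(pairsA H (r ^ 2 * m) (r * d)) : ℝ) ≤
      countRep m d * (if ((r ^ 2 * m : ℕ) : ℝ) ≤ 2 * H ^ 2 then 1 else 0) :=
  card_le_countRep_mul_indicator (pairsA_subset_image hr) fun _ hp => by
    obtain ⟨hsum, -, hhH, hnh, -⟩ := mem_pairsA.mp hp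
    exact cast_le_two_mul_sq hsum hnh hhH

lemma card_pairsB_le (hr : 0 < r) :
    (#(pairsB H (r ^ 2 * m) (r * d)) : ℝ) ≤
      countRep m d * (if ((r ^ 2 * m : ℕ) : ℝ) ≤ 2 * H ^ 2 then 1 else 0) :=
  card_le_countRep_mul_indicator (pairsB_subset_image hr) fun _ hp => by
    obtain ⟨hsum, -, hhH, hnh, -⟩ := mem_pairsB.mp hp
    exact cast_le_two_mul_sq hsum hnh hhH

end Counting

section Coefficients

variable {q : ℕ} {H : ℝ} {M D : ℕ}

lemma abs_aHstar_le (hq : 1 ≤ q) (hD : 0 < D) :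
    |aHstar q H M D| ≤
      (M : ℝ) ^ (-(3 / 4 : ℝ)) * (√M / H) * (#(pairsA H M D) + #(pairsB H M D)) := by
  have hA := abs_sum_le_card_mul (s := pairsA H M D) fun p hp => abs_termA_le hq hp
  have hB := abs_sum_le_card_mul (s := pairsB H M D) fun p hp => abs_termB_le (q := q) hD hp
  rw [aHstar, abs_mul, abs_of_nonneg (by positivity)]
  calc _ ≤ (M : ℝ) ^ (-(3 / 4 : ℝ)) *
        (#(pairsA H M D) * (√M / H) + #(pairsB H M D) * (√M / H)) := by
        gcongr
        exact (abs_add_le _ _).trans (add_le_add hA hB)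
    _ = _ := by ring

lemma abs_bHstar_le (hq : 1 ≤ q) (hD : 0 < D) :
    |bHstar q H M D| ≤
      (M : ℝ) ^ (-(3 / 4 : ℝ)) * (√M / H) *
        (2 * #(pairsA H M D) + 4 * #((pairsB H M D).filter (fun p => 4 ∣ p.1))) := by
  have hA := abs_sum_le_card_mul (s := pairsA H M D)
    (f := fun p => wD p.1 p.2 * lamD p.2 * tauStar (p.2 / ((⌊H⌋ : ℝ) + 1)) * gg q (p.1 / √M))
    fun p hp => by
    rw [mul_right_comm _ (lamD _), mul_right_comm _ (lamD _), abs_mul]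
    exact (mul_le_of_le_one_right (abs_nonneg _) (abs_lamD_le_one _)).trans (abs_termA_le hq hp)
  have hB := abs_sum_le_card_mul (s := (pairsB H M D).filter (fun p => 4 ∣ p.1)) fun p hp =>
    abs_termB_le (q := q) hD (mem_of_mem_filter p hp)
  rw [bHstar, abs_mul, abs_of_nonneg (by positivity)]
  calc _ ≤ 2 * (M : ℝ) ^ (-(3 / 4 : ℝ)) *
        (#(pairsA H M D) * (√M / H) +
          2 * (#((pairsB H M D).filter (fun p => 4 ∣ p.1)) * (√M / H))) := by
        gcongr
        refine (abs_add_le _ _).trans (add_le_add hA ?_)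
        rw [abs_mul, abs_two]
        gcongr
    _ = _ := by ring

lemma abs_dHstar_le (q : ℕ) (H : ℝ) (M D : ℕ) :
    |dHstar q H M D| ≤ 2 ^ (q - 1) * |aHstar q H M D| + 4 ^ (q - 1) * |bHstar q H M D| := by
  have hind : |(if D % 4 = 0 then (1 : ℝ) else 0)| ≤ 1 := by split_ifs <;> norm_num
  refine (abs_add_le _ _).trans (add_le_add ?_ ?_)
  · rw [abs_mul, abs_of_nonneg (by positivity)]
  · rw [abs_mul, abs_mul, abs_of_nonneg (by positivity : (0 : ℝ) ≤ 4 ^ (q - 1))]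
    exact mul_le_mul_of_nonneg_right (mul_le_of_le_one_left (by positivity) hind) (abs_nonneg _)

end Coefficients

lemma rpow_neg_three_quarters_mul_sqrt {x y : ℝ} (hx : 0 ≤ x) (hy : 0 ≤ y) :
    (x ^ 2 * y) ^ (-(3 / 4 : ℝ)) * √(x ^ 2 * y) =
      √y / (x ^ ((1 : ℝ) / 2) * y ^ ((3 : ℝ) / 4)) := by
  have hx2 : (x ^ 2) ^ (-(1 / 4 : ℝ)) = (x ^ ((1 : ℝ) / 2))⁻¹ := by
    rw [← Real.rpow_natCast, ← Real.rpow_mul hx, ← Real.rpow_neg hx]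
    norm_num
  have hy4 : y ^ (-(1 / 4 : ℝ)) = √y * (y ^ ((3 : ℝ) / 4))⁻¹ := by
    rw [Real.sqrt_eq_rpow, ← Real.rpow_neg hy, ← Real.rpow_add' hy (by norm_num)]
    norm_num
  rw [Real.sqrt_eq_rpow, ← Real.rpow_add' (by positivity) (by norm_num),
    show -(3 / 4 : ℝ) + 1 / 2 = -(1 / 4) by norm_num, Real.mul_rpow (by positivity) hy, hx2, hy4]
  ring

lemma cast_rpow_mul_sqrt_div_le {r m : ℕ} {H Y : ℝ} (hH : 0 ≤ H) (hY : (m : ℝ) ≤ Y) :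
    ((r ^ 2 * m : ℕ) : ℝ) ^ (-(3 / 4 : ℝ)) * (√(r ^ 2 * m : ℕ) / H) ≤
      √Y / ((r : ℝ) ^ ((1 : ℝ) / 2) * (m : ℝ) ^ ((3 : ℝ) / 4) * H) := by
  rw [← mul_div_assoc, Nat.cast_mul, Nat.cast_pow,
    rpow_neg_three_quarters_mul_sqrt (by positivity) (by positivity), div_div]
  gcongr

/-- Lemma 4.4. -/
theorem statement17 (q : ℕ) (hq : 3 ≤ q) :
    ∃ C : ℝ, 0 < C ∧ ∀ H : ℝ, 1 ≤ H → ∀ r d m : ℕ, 1 ≤ r → 1 ≤ d → 1 ≤ m →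
      ((r*d : ℕ):ℝ) ≤ H → ∀ Y : ℝ, (m:ℝ) ≤ Y →
      |aHstar q H (r^2*m) (r*d)| ≤
        C * (Real.sqrt Y / ((r:ℝ)^((1:ℝ)/2) * (m:ℝ)^((3:ℝ)/4) * H)) * countRep m d *
          (if ((r^2*m : ℕ):ℝ) ≤ 2*H^2 then 1 else 0)
      ∧ |dHstar q H (r^2*m) (r*d)| ≤
        C * (Real.sqrt Y / ((r:ℝ)^((1:ℝ)/2) * (m:ℝ)^((3:ℝ)/4) * H)) * countRep m d *
          (if ((r^2*m : ℕ):ℝ) ≤ 2*H^2 then 1 else 0) := by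
  refine ⟨2 ^ q + 6 * 4 ^ (q - 1), by positivity, fun H hH r d m hr hd _ _ Y hY => ?_⟩
  set K := countRep m d * (if ((r ^ 2 * m : ℕ) : ℝ) ≤ 2 * H ^ 2 then 1 else 0)
  set X := √Y / ((r : ℝ) ^ ((1 : ℝ) / 2) * (m : ℝ) ^ ((3 : ℝ) / 4) * H)
  have hX : 0 ≤ X := div_nonneg (Real.sqrt_nonneg _) (mul_nonneg (by positivity) (by linarith))
  have hK : 0 ≤ K := by simp only [K, countRep]; positivity
  have hE := cast_rpow_mul_sqrt_div_le (r := r) (H := H) (by linarith) hY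
  have hA : (#(pairsA H (r ^ 2 * m) (r * d)) : ℝ) ≤ K := card_pairsA_le hr
  have hB₄ : (#((pairsB H (r ^ 2 * m) (r * d)).filter (fun p => 4 ∣ p.1)) : ℝ) ≤ K :=
    (Nat.cast_le.mpr (card_filter_le _ _)).trans (card_pairsB_le hr)
  have ha : |aHstar q H (r ^ 2 * m) (r * d)| ≤ 2 * X * K := by
    calc _ ≤ _ := abs_aHstar_le (by omega) (by positivity)
      _ ≤ X * (K + K) := mul_le_mul hE (add_le_add hA (card_pairsB_le hr)) (by positivity) hX
      _ = 2 * X * K := by ring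
  have hb : |bHstar q H (r ^ 2 * m) (r * d)| ≤ 6 * X * K := by
    calc _ ≤ _ := abs_bHstar_le (by omega) (by positivity)
      _ ≤ X * (2 * K + 4 * K) := mul_le_mul hE (by gcongr) (by positivity) hX
      _ = 6 * X * K := by ring
  refine ⟨?_, ?_⟩ <;> rw [mul_assoc _ (countRep m d)]
  · refine ha.trans ?_
    gcongr
    exact le_add_of_le_of_nonneg (le_self_pow₀ one_le_two (by omega)) (by positivity)
  · calc _ ≤ 2 ^ (q - 1) * (2 * X * K) + 4 ^ (q - 1) * (6 * X * K) :=
          (abs_dHstar_le q H _ _).trans (by gcongr)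
      _ = (2 ^ q + 6 * 4 ^ (q - 1)) * X * K := by
          rw [← pow_sub_one_mul (by omega : q ≠ 0)]; ring

end Gath
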